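/- Let $(M_t)_{t\ge 0}$ be a continuous local martingale started in zero with quadratic variation process $\langle M\rangle$. Then for every $\kappa>0$, $\mathbb{P}(\sup_{t\ge 0}(M_t-\langle M\rangle_t)\ge \kappa)\le \kappa^{-2}+\sum_{n=0}^\infty 2^{n+1}(2^n+\kappa)^{-2}$. -/

import Mathlib

/-!
Split the event according to the dyadic block `2 ^ n ≤ ⟨M⟩_t < 2 ^ (n + 1)` in which
`M_t - ⟨M⟩_t ≥ κ` happens: there `⟨M⟩_t ≤ 2 ^ (n + 1)` and `M_t ≥ 2 ^ n + κ` (and `⟨M⟩_t ≤ 1`,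
`M_t ≥ κ` below the first block). Each piece is bounded by the maximal inequality
`P(∃ t, ⟨M⟩_t ≤ c ∧ l ≤ M_t) ≤ c / l ^ 2`.

For a martingale `X` with `X ^ 2 - A` a martingale, stop at the first time `T` at which `X`
exceeds `l' < l` or `A` exceeds `c`. Optional stopping gives `E[X_T ^ 2] = E[A_T] ≤ c`, and
the event forces `X_T ≥ l'`, so Chebyshev bounds its probability by `c / l' ^ 2`; let `l' → l`.
Optional stopping in continuous time reduces to optional sampling at countably-valued stopping
times: approximate `T` from above by stopping times with dyadic values. The martingale sampled
at these is a family of conditional expectations of one integrable variable, hence uniformly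
integrable, and it converges to its value at `T` by right-continuity. The local martingale
case follows by localisation.
-/

open MeasureTheory Filter Set
open scoped NNReal ENNReal Topology

noncomputable def nextDyadic (N : ℕ) (t : ℝ≥0) : ℝ≥0 := (⌊t * 2 ^ N⌋₊ + 1) / 2 ^ N

lemma lt_nextDyadic (N : ℕ) (t : ℝ≥0) : t < nextDyadic N t := by
  rw [nextDyadic, lt_div_iff₀ (by positivity)]
  exact Nat.lt_floor_add_one _

lemma nextDyadic_le_add (N : ℕ) (t : ℝ≥0) : nextDyadic N t ≤ t + (2 ^ N)⁻¹ := by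
  rw [nextDyadic, div_le_iff₀ (by positivity), add_mul, inv_mul_cancel₀ (by positivity)]
  gcongr
  exact Nat.floor_le zero_le

lemma tendsto_nextDyadic (t : ℝ≥0) : Tendsto (nextDyadic · t) atTop (𝓝[>] t) := by
  refine tendsto_nhdsWithin_iff.2 ⟨?_, Eventually.of_forall (lt_nextDyadic · t)⟩
  have hinv : Tendsto (fun N : ℕ => t + (2 ^ N)⁻¹) atTop (𝓝 t) := by
    simpa [inv_pow] using tendsto_const_nhds.add
      (NNReal.tendsto_pow_atTop_nhds_zero_of_lt_one (r := 2⁻¹) (by norm_num))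
  exact tendsto_of_tendsto_of_tendsto_of_le_of_le tendsto_const_nhds hinv
    (fun N => (lt_nextDyadic N t).le) (nextDyadic_le_add · t)

lemma nextDyadic_le_iff {N : ℕ} {t u : ℝ≥0} :
    nextDyadic N t ≤ u ↔ t < ⌊u * 2 ^ N⌋₊ / 2 ^ N := by
  rw [nextDyadic, div_le_iff₀ (by positivity), lt_div_iff₀ (by positivity), ← Nat.cast_succ,
    ← Nat.le_floor_iff zero_le, Nat.succ_le_iff, Nat.floor_lt zero_le]

namespace MeasureTheory

variable {Ω ι : Type*} {m : MeasurableSpace Ω}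

/-- Unlike stopping times, optional times include the hitting times of open sets by
right-continuous processes without assuming the filtration right-continuous. -/
def IsOptionalTime [Preorder ι] (ℱ : Filtration ι m) (T : Ω → ι) : Prop :=
  ∀ i, MeasurableSet[ℱ i] {ω | T ω < i}

lemma IsOptionalTime.min [LinearOrder ι] {ℱ : Filtration ι m} {T T' : Ω → ι}
    (hT : IsOptionalTime ℱ T) (hT' : IsOptionalTime ℱ T') :
    IsOptionalTime ℱ fun ω => min (T ω) (T' ω) := by
  intro i
  simp only [min_lt_iff, ofPred_or]
  exact (hT i).union (hT' i)

lemma IsOptionalTime.isStoppingTime_nextDyadic {ℱ : Filtration ℝ≥0 m} {T : Ω → ℝ≥0}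
    (hT : IsOptionalTime ℱ T) (N : ℕ) :
    IsStoppingTime ℱ fun ω => (nextDyadic N (T ω) : WithTop ℝ≥0) := by
  intro u
  simp only [WithTop.coe_le_coe, nextDyadic_le_iff]
  refine ℱ.mono ?_ _ (hT _)
  rw [div_le_iff₀ (by positivity)]
  exact Nat.floor_le zero_le

lemma countable_range_nextDyadic (N : ℕ) (T : Ω → ℝ≥0) :
    (range fun ω => (nextDyadic N (T ω) : WithTop ℝ≥0)).Countable :=
  (countable_range fun k : ℕ => (((k + 1) / 2 ^ N : ℝ≥0) : WithTop ℝ≥0)).mono (by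
    rintro _ ⟨ω, rfl⟩
    exact ⟨_, rfl⟩)

lemma stoppedProcess_coe_apply {β : Type*} [LinearOrder ι] [Nonempty ι] (u : ι → Ω → β)
    (T : Ω → ι) (i : ι) (ω : Ω) :
    stoppedProcess u (fun ω => (T ω : WithTop ι)) i ω = u (min i (T ω)) ω := rfl

theorem UniformIntegrable.tendsto_integral_of_ae_tendsto {μ : Measure Ω} [IsFiniteMeasure μ]
    {E : Type*} [NormedAddCommGroup E] [NormedSpace ℝ E] [CompleteSpace E]
    {f : ℕ → Ω → E} {g : Ω → E} (hf : UniformIntegrable f 1 μ)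
    (hfg : ∀ᵐ ω ∂μ, Tendsto (fun n => f n ω) atTop (𝓝 (g ω))) :
    Tendsto (fun n => ∫ ω, f n ω ∂μ) atTop (𝓝 (∫ ω, g ω ∂μ)) := by
  have hg := hf.integrable_of_ae_tendsto hfg
  exact tendsto_integral_of_L1' g hg.1
    (Eventually.of_forall fun n => memLp_one_iff_integrable.1 (hf.memLp n))
    (tendsto_Lp_finite_of_tendsto_ae le_rfl ENNReal.one_ne_top hf.1
      (memLp_one_iff_integrable.2 hg) hf.2.1 hfg)

lemma measure_le_le_ofReal_div_sq {μ : Measure Ω} {f : Ω → ℝ}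
    (hf : Integrable (fun ω => f ω ^ 2) μ) {c ε : ℝ} (hε : 0 < ε) (hfc : ∫ ω, f ω ^ 2 ∂μ ≤ c) :
    μ {ω | ε ≤ f ω} ≤ ENNReal.ofReal (c / ε ^ 2) := by
  have hε2 : 0 < ε ^ 2 := by positivity
  calc μ {ω | ε ≤ f ω} ≤ μ {ω | ENNReal.ofReal (ε ^ 2) ≤ ENNReal.ofReal (f ω ^ 2)} :=
        measure_mono fun ω hω => ENNReal.ofReal_le_ofReal (pow_le_pow_left₀ hε.le hω 2)
    _ ≤ (∫⁻ ω, ENNReal.ofReal (f ω ^ 2) ∂μ) / ENNReal.ofReal (ε ^ 2) :=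
        meas_ge_le_lintegral_div hf.aemeasurable.ennreal_ofReal
          (ENNReal.ofReal_pos.2 hε2).ne' ENNReal.ofReal_ne_top
    _ = ENNReal.ofReal ((∫ ω, f ω ^ 2 ∂μ) / ε ^ 2) := by
        rw [← ofReal_integral_eq_lintegral_ofReal hf (ae_of_all _ fun ω => sq_nonneg _),
          ENNReal.ofReal_div_of_pos hε2]
    _ ≤ ENNReal.ofReal (c / ε ^ 2) := by gcongr

lemma le_ofReal_div_sq_of_forall_lt {a : ℝ≥0∞} {c l : ℝ} (hl : 0 < l)
    (h : ∀ l' ∈ Ioo 0 l, a ≤ ENNReal.ofReal (c / l' ^ 2)) :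
    a ≤ ENNReal.ofReal (c / l ^ 2) := by
  have hcont : Tendsto (fun l' : ℝ => ENNReal.ofReal (c / l' ^ 2)) (𝓝[<] l)
      (𝓝 (ENNReal.ofReal (c / l ^ 2))) :=
    (ENNReal.continuous_ofReal.tendsto _).comp <| (tendsto_const_nhds.div
      ((continuous_pow 2).tendsto l) (by positivity)).mono_left nhdsWithin_le_nhds
  exact ge_of_tendsto hcont (eventually_of_mem (Ioo_mem_nhdsLT hl) h)

lemma measure_le_of_forall_eventually_mem {μ : Measure Ω} {s : Set Ω} {D : ℕ → Set Ω}
    {b : ℝ≥0∞} (hs : ∀ ω ∈ s, ∀ᶠ k in atTop, ω ∈ D k) (hD : ∀ k, μ (D k) ≤ b) : μ s ≤ b := by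
  have hsub : s ⊆ ⋃ k, ⋂ j ≥ k, D j := fun ω hω => by
    simpa using eventually_atTop.1 (hs ω hω)
  calc μ s ≤ μ (⋃ k, ⋂ j ≥ k, D j) := measure_mono hsub
    _ = ⨆ k, μ (⋂ j ≥ k, D j) :=
        Monotone.measure_iUnion fun a b hab => biInter_subset_biInter_left fun j hj => hab.trans hj
    _ ≤ b := iSup_le fun k => (measure_mono (biInter_subset_of_mem le_rfl)).trans (hD k)

section OptionalStopping

variable {μ : Measure Ω} [IsFiniteMeasure μ] {ℱ : Filtration ℝ≥0 m} {Z : ℝ≥0 → Ω → ℝ}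
  {T : Ω → ℝ≥0}

lemma tendsto_stoppedValue_nextDyadic (hZ : ∀ ω t, ContinuousWithinAt (Z · ω) (Ici t) t)
    (ω : Ω) :
    Tendsto (fun N => stoppedValue Z (fun ω => (nextDyadic N (T ω) : WithTop ℝ≥0)) ω) atTop
      (𝓝 (Z (T ω) ω)) :=
  ((hZ ω (T ω)).mono Ioi_subset_Ici_self).tendsto.comp (tendsto_nextDyadic (T ω))

lemma Martingale.stoppedValue_nextDyadic_ae_eq_condExp (hZ : Martingale Z ℱ μ)
    (hT : IsOptionalTime ℱ T) {S : ℝ≥0} (hTS : ∀ ω, T ω ≤ S) (N : ℕ) :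
    stoppedValue Z (fun ω => (nextDyadic N (T ω) : WithTop ℝ≥0)) =ᵐ[μ]
      μ[Z (S + 1) | (hT.isStoppingTime_nextDyadic N).measurableSpace] := by
  refine hZ.stoppedValue_ae_eq_condExp_of_le_const_of_countable_range _ (fun ω => ?_)
    (countable_range_nextDyadic N T)
  have h2 : (2 ^ N : ℝ≥0)⁻¹ ≤ 1 := inv_le_one_of_one_le₀ (one_le_pow₀ one_le_two)
  exact WithTop.coe_le_coe.2 ((nextDyadic_le_add N (T ω)).trans (add_le_add (hTS ω) h2))

lemma Martingale.uniformIntegrable_stoppedValue_nextDyadic (hZ : Martingale Z ℱ μ)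
    (hT : IsOptionalTime ℱ T) {S : ℝ≥0} (hTS : ∀ ω, T ω ≤ S) :
    UniformIntegrable
      (fun N => stoppedValue Z (fun ω => (nextDyadic N (T ω) : WithTop ℝ≥0))) 1 μ :=
  ((hZ.integrable (S + 1)).uniformIntegrable_condExp
      fun N => (hT.isStoppingTime_nextDyadic N).measurableSpace_le).ae_eq
    fun N => (hZ.stoppedValue_nextDyadic_ae_eq_condExp hT hTS N).symm

theorem Martingale.integrable_comp_of_isOptionalTime (hZ : Martingale Z ℱ μ)
    (hZc : ∀ ω t, ContinuousWithinAt (Z · ω) (Ici t) t) (hT : IsOptionalTime ℱ T) {S : ℝ≥0}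
    (hTS : ∀ ω, T ω ≤ S) :
    Integrable (fun ω => Z (T ω) ω) μ :=
  (hZ.uniformIntegrable_stoppedValue_nextDyadic hT hTS).integrable_of_ae_tendsto
    (ae_of_all _ (tendsto_stoppedValue_nextDyadic hZc))

theorem Martingale.integral_comp_of_isOptionalTime (hZ : Martingale Z ℱ μ)
    (hZc : ∀ ω t, ContinuousWithinAt (Z · ω) (Ici t) t) (hT : IsOptionalTime ℱ T) {S : ℝ≥0}
    (hTS : ∀ ω, T ω ≤ S) :
    ∫ ω, Z (T ω) ω ∂μ = ∫ ω, Z 0 ω ∂μ := by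
  have hconst : ∀ N, ∫ ω, stoppedValue Z (fun ω => (nextDyadic N (T ω) : WithTop ℝ≥0)) ω ∂μ =
      ∫ ω, Z 0 ω ∂μ := fun N => by
    rw [integral_congr_ae (hZ.stoppedValue_nextDyadic_ae_eq_condExp hT hTS N), integral_condExp,
      ← setIntegral_univ, ← hZ.setIntegral_eq zero_le MeasurableSet.univ, setIntegral_univ]
  refine tendsto_nhds_unique (f := fun _ : ℕ => ∫ ω, Z 0 ω ∂μ) (l := atTop) ?_ tendsto_const_nhds
  simpa only [hconst] using
    (hZ.uniformIntegrable_stoppedValue_nextDyadic hT hTS).tendsto_integral_of_ae_tendsto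
      (ae_of_all _ (tendsto_stoppedValue_nextDyadic hZc))

end OptionalStopping

section HittingTime

variable {β : Type*} [TopologicalSpace β] {u : ℝ≥0 → Ω → β} {s : Set β} {n S : ℝ≥0} {ω : Ω}

theorem Adapted.isOptionalTime_hittingBtwn [MeasurableSpace β] [OpensMeasurableSpace β]
    {ℱ : Filtration ℝ≥0 m} (hu : Adapted ℱ u) (hc : ∀ ω t, ContinuousWithinAt (u · ω) (Ici t) t)
    (hs : IsOpen s) (n S : ℝ≥0) :
    IsOptionalTime ℱ (hittingBtwn u s n S) := by
  intro i
  rcases le_or_gt i S with hi | hi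
  swap
  · convert MeasurableSet.univ
    exact eq_univ_of_forall fun ω => (hittingBtwn_le ω).trans_lt hi
  obtain ⟨D, hDc, hD⟩ := TopologicalSpace.exists_countable_dense ℝ≥0
  -- by right-continuity, a visit to `s` before `i` is followed by one at a time in `D`
  have hvisit : {ω | hittingBtwn u s n S ω < i} = ⋃ q ∈ D ∩ Ico n i, {ω | u q ω ∈ s} := by
    ext ω
    simp only [mem_ofPred_eq, hittingBtwn_lt_iff i hi, mem_iUnion, exists_prop]
    refine ⟨fun ⟨j, hj, hjs⟩ => ?_, fun ⟨q, ⟨_, hq⟩, hqs⟩ => ⟨q, hq, hqs⟩⟩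
    have hnear : ∀ᶠ t in 𝓝[≥] j, u t ω ∈ s ∧ t < i :=
      ((hc ω j).eventually (hs.mem_nhds hjs)).and (nhdsWithin_le_nhds (Iio_mem_nhds hj.2))
    obtain ⟨b, hjb, hb⟩ := (mem_nhdsGE_iff_exists_Ico_subset).1 hnear
    obtain ⟨q, hqD, hjq, hqb⟩ := hD.exists_between hjb
    exact ⟨q, ⟨hqD, hj.1.trans hjq.le, (hb ⟨hjq.le, hqb⟩).2⟩, (hb ⟨hjq.le, hqb⟩).1⟩
  rw [hvisit]
  exact .biUnion (hDc.mono inter_subset_left) fun q hq =>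
    ℱ.mono hq.2.2.le _ (hu q hs.measurableSet)

lemma apply_hittingBtwn_mem_closure (hc : ∀ t, ContinuousWithinAt (u · ω) (Ici t) t)
    (h : ∃ j ∈ Icc n S, u j ω ∈ s) :
    u (hittingBtwn u s n S ω) ω ∈ closure s := by
  have hglb : IsGLB (Icc n S ∩ {i | u i ω ∈ s}) (hittingBtwn u s n S ω) := by
    rw [hittingBtwn, if_pos h]
    exact isGLB_csInf (by simpa [Set.Nonempty] using h) (OrderBot.bddBelow _)
  refine mem_closure_of_frequently_of_tendsto ?_ (hc _).tendsto
  exact (hglb.frequently_mem (by simpa [Set.Nonempty] using h)).mono fun t ht => ht.2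

lemma apply_hittingBtwn_notMem (hc : ∀ t, ContinuousWithinAt (u · ω) (Iic t) t) (hs : IsOpen s)
    (hn : u n ω ∉ s) (hnS : n ≤ S) :
    u (hittingBtwn u s n S ω) ω ∉ s := by
  set T := hittingBtwn u s n S ω
  have hnT : n ≤ T := le_hittingBtwn hnS ω
  rcases hnT.eq_or_lt with hT | hT
  · rwa [← hT]
  intro hTs
  have : NeBot (𝓝[<] T) := nhdsLT_neBot_of_exists_lt ⟨n, hT⟩
  have hbefore : ∀ᶠ t in 𝓝[<] T, u t ω ∈ s ∧ n < t :=
    (((hc T).mono Iio_subset_Iic_self).eventually (hs.mem_nhds hTs)).and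
      (nhdsWithin_le_nhds (Ioi_mem_nhds hT))
  obtain ⟨t, ⟨hts, hnt⟩, htT⟩ := (hbefore.and self_mem_nhdsWithin).exists
  exact notMem_of_lt_hittingBtwn htT hnt.le hts

end HittingTime

section ExitTime

variable {X A : ℝ≥0 → Ω → ℝ} {l' c : ℝ} {S : ℝ≥0} {ω : Ω}

noncomputable def exitTime (X A : ℝ≥0 → Ω → ℝ) (l' c : ℝ) (S : ℝ≥0) (ω : Ω) : ℝ≥0 :=
  min (hittingBtwn X (Ioi l') 0 S ω) (hittingBtwn A (Ioi c) 0 S ω)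

lemma exitTime_le (ω : Ω) : exitTime X A l' c S ω ≤ S :=
  (min_le_left _ _).trans (hittingBtwn_le ω)

lemma isOptionalTime_exitTime {ℱ : Filtration ℝ≥0 m} (hX : Adapted ℱ X) (hA : Adapted ℱ A)
    (hXc : ∀ ω t, ContinuousWithinAt (X · ω) (Ici t) t)
    (hAc : ∀ ω t, ContinuousWithinAt (A · ω) (Ici t) t) :
    IsOptionalTime ℱ (exitTime X A l' c S) :=
  (hX.isOptionalTime_hittingBtwn hXc isOpen_Ioi 0 S).min
    (hA.isOptionalTime_hittingBtwn hAc isOpen_Ioi 0 S)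

lemma apply_exitTime_mem_Icc (hA0 : A 0 ω = 0) (hAc : Continuous (A · ω))
    (hAm : Monotone (A · ω)) (hc : 0 ≤ c) :
    A (exitTime X A l' c S ω) ω ∈ Icc 0 c := by
  refine ⟨hA0 ▸ hAm zero_le, (hAm (min_le_right _ _)).trans (not_lt.1 ?_)⟩
  exact apply_hittingBtwn_notMem (fun t => hAc.continuousWithinAt) isOpen_Ioi
    (by simp [hA0, hc]) zero_le

lemma le_apply_exitTime {l : ℝ} (hXc : ∀ t, ContinuousWithinAt (X · ω) (Ici t) t)
    (hAm : Monotone (A · ω)) (hl : l' < l) (h : ∃ t ≤ S, A t ω ≤ c ∧ l ≤ X t ω) :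
    l' ≤ X (exitTime X A l' c S ω) ω := by
  obtain ⟨t, htS, hAt, hXt⟩ := h
  have hXt' : t ≤ S ∧ X t ω ∈ Ioi l' := ⟨htS, hl.trans_le hXt⟩
  have hTXt : hittingBtwn X (Ioi l') 0 S ω ≤ t := hittingBtwn_le_of_mem zero_le htS hXt'.2
  -- `A` stays below `c` up to time `t`, so `X` is the first to leave
  have hTXA : hittingBtwn X (Ioi l') 0 S ω ≤ hittingBtwn A (Ioi c) 0 S ω := by
    by_contra! hlt
    obtain ⟨j, hj, hAj⟩ := (hittingBtwn_lt_iff _ (hittingBtwn_le ω)).1 hlt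
    exact ((hAm (hj.2.le.trans hTXt)).trans hAt).not_gt hAj
  have hclosure := apply_hittingBtwn_mem_closure hXc ⟨t, ⟨zero_le, htS⟩, hXt'.2⟩
  rw [closure_Ioi] at hclosure
  simpa only [exitTime, min_eq_left hTXA, mem_Ici] using hclosure

end ExitTime

theorem Martingale.measure_le_comp_le_of_isOptionalTime {μ : Measure Ω} [IsProbabilityMeasure μ]
    {ℱ : Filtration ℝ≥0 m} {X A : ℝ≥0 → Ω → ℝ} (hX : Martingale X ℱ μ)
    (hXA : Martingale (fun t ω => X t ω ^ 2 - A t ω) ℱ μ) (hX0 : ∀ ω, X 0 ω = 0)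
    (hA0 : ∀ ω, A 0 ω = 0) (hXc : ∀ ω t, ContinuousWithinAt (X · ω) (Ici t) t)
    (hAc : ∀ ω t, ContinuousWithinAt (A · ω) (Ici t) t) {T : Ω → ℝ≥0} (hT : IsOptionalTime ℱ T)
    {S : ℝ≥0} (hTS : ∀ ω, T ω ≤ S) {c : ℝ} (hAT : ∀ ω, A (T ω) ω ∈ Icc 0 c) {ε : ℝ}
    (hε : 0 < ε) :
    μ {ω | ε ≤ X (T ω) ω} ≤ ENNReal.ofReal (c / ε ^ 2) := by
  have hZc : ∀ ω t, ContinuousWithinAt (fun s => X s ω ^ 2 - A s ω) (Ici t) t :=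
    fun ω t => ((hXc ω t).pow 2).sub (hAc ω t)
  have hZTint := hXA.integrable_comp_of_isOptionalTime hZc hT hTS
  have hATint : Integrable (fun ω => A (T ω) ω) μ := by
    refine Integrable.of_bound (C := c) ?_ (ae_of_all _ fun ω => ?_)
    · have hA : (fun ω => A (T ω) ω) =
          fun ω => X (T ω) ω ^ 2 - (X (T ω) ω ^ 2 - A (T ω) ω) := by funext; ring
      rw [hA]
      exact ((hX.integrable_comp_of_isOptionalTime hXc hT hTS).1.pow 2).sub hZTint.1
    · rw [Real.norm_eq_abs, abs_of_nonneg (hAT ω).1]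
      exact (hAT ω).2
  have hATc : ∫ ω, A (T ω) ω ∂μ ≤ c := by
    simpa using integral_mono hATint (integrable_const c) fun ω => (hAT ω).2
  have hsq : (fun ω => X (T ω) ω ^ 2) = fun ω => A (T ω) ω + (X (T ω) ω ^ 2 - A (T ω) ω) := by
    funext; ring
  refine measure_le_le_ofReal_div_sq (hsq ▸ hATint.add hZTint) hε ?_
  rw [hsq, integral_add hATint hZTint, hXA.integral_comp_of_isOptionalTime hZc hT hTS]
  simpa [hX0, hA0] using hATc

theorem Martingale.measure_exists_le_and_le {μ : Measure Ω} [IsProbabilityMeasure μ]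
    {ℱ : Filtration ℝ≥0 m} {X A : ℝ≥0 → Ω → ℝ} (hX : Martingale X ℱ μ)
    (hXA : Martingale (fun t ω => X t ω ^ 2 - A t ω) ℱ μ) (hX0 : ∀ ω, X 0 ω = 0)
    (hXc : ∀ ω t, ContinuousWithinAt (X · ω) (Ici t) t) (hA0 : ∀ ω, A 0 ω = 0)
    (hAc : ∀ ω, Continuous (A · ω)) (hAm : ∀ ω, Monotone (A · ω)) (S : ℝ≥0) {c l : ℝ}
    (hc : 0 ≤ c) (hl : 0 < l) :
    μ {ω | ∃ t ≤ S, A t ω ≤ c ∧ l ≤ X t ω} ≤ ENNReal.ofReal (c / l ^ 2) := by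
  have hAadapted : Adapted ℱ A := fun t => by
    have hA : A t = fun ω => X t ω ^ 2 - (X t ω ^ 2 - A t ω) := by funext; ring
    rw [hA]
    exact (((hX.stronglyAdapted t).pow 2).sub (hXA.stronglyAdapted t)).measurable
  have hAc' : ∀ ω t, ContinuousWithinAt (A · ω) (Ici t) t :=
    fun ω t => (hAc ω).continuousWithinAt
  refine le_ofReal_div_sq_of_forall_lt hl fun l' hl' =>
    (measure_mono fun ω hω => le_apply_exitTime (hXc ω) (hAm ω) hl'.2 hω).trans ?_
  exact hX.measure_le_comp_le_of_isOptionalTime hXA hX0 hA0 hXc hAc'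
    (isOptionalTime_exitTime (fun t => (hX.stronglyAdapted t).measurable) hAadapted hXc hAc')
    exitTime_le (fun ω => apply_exitTime_mem_Icc (hA0 ω) (hAc ω) (hAm ω) hc) hl'.1

theorem measure_exists_le_and_le_of_localizing {μ : Measure Ω} [IsProbabilityMeasure μ]
    {ℱ : Filtration ℝ≥0 m} {M Q : ℝ≥0 → Ω → ℝ} (hM0 : ∀ ω, M 0 ω = 0)
    (hMc : ∀ ω, Continuous (M · ω)) (hQ0 : ∀ ω, Q 0 ω = 0) (hQc : ∀ ω, Continuous (Q · ω))
    (hQm : ∀ ω, Monotone (Q · ω)) {τ : ℕ → Ω → ℝ≥0}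
    (hτ : ∀ ω, Tendsto (τ · ω) atTop atTop)
    (hMloc : ∀ k, Martingale (stoppedProcess M fun ω => (τ k ω : WithTop ℝ≥0)) ℱ μ)
    (hQloc : ∀ k, Martingale
      (stoppedProcess (fun t ω => M t ω ^ 2 - Q t ω) fun ω => (τ k ω : WithTop ℝ≥0)) ℱ μ)
    {c l : ℝ} (hc : 0 ≤ c) (hl : 0 < l) :
    μ {ω | ∃ t, Q t ω ≤ c ∧ l ≤ M t ω} ≤ ENNReal.ofReal (c / l ^ 2) := by
  refine measure_le_of_forall_eventually_mem
    (D := fun k => {ω | ∃ t ≤ (k : ℝ≥0), Q (min t (τ k ω)) ω ≤ c ∧ l ≤ M (min t (τ k ω)) ω})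
    ?_ fun k => ?_
  · rintro ω ⟨t, hQt, hMt⟩
    filter_upwards [(hτ ω).eventually_ge_atTop t,
      tendsto_natCast_atTop_atTop.eventually_ge_atTop t] with k hτk hk
    exact ⟨t, hk, by rwa [min_eq_left hτk], by rwa [min_eq_left hτk]⟩
  · exact (hMloc k).measure_exists_le_and_le (A := fun t ω => Q (min t (τ k ω)) ω) (hQloc k)
      (fun ω => by rw [stoppedProcess_coe_apply, min_eq_left zero_le, hM0])
      (fun ω t => ((hMc ω).comp (continuous_id.min continuous_const)).continuousWithinAt)
      (fun ω => by simp [hQ0]) (fun ω => (hQc ω).comp (continuous_id.min continuous_const))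
      (fun ω a b hab => hQm ω (min_le_min_right _ hab)) k hc hl

end MeasureTheory

lemma le_one_and_le_or_exists_pow_two {q x κ : ℝ} (hq : 0 ≤ q) (h : κ ≤ x - q) :
    (q ≤ 1 ∧ κ ≤ x) ∨ ∃ n : ℕ, q ≤ 2 ^ (n + 1) ∧ 2 ^ n + κ ≤ x := by
  rcases le_or_gt q 1 with hq1 | hq1
  · exact .inl ⟨hq1, by linarith⟩
  · obtain ⟨n, hn, hn'⟩ := exists_nat_pow_near hq1.le one_lt_two
    exact .inr ⟨n, hn'.le, by linarith⟩

lemma summable_two_pow_succ_div_sq {κ : ℝ} (hκ : 0 ≤ κ) :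
    Summable fun n : ℕ => (2 : ℝ) ^ (n + 1) / ((2 : ℝ) ^ n + κ) ^ 2 := by
  refine (summable_geometric_two.mul_left 2).of_nonneg_of_le (fun n => by positivity) fun n => ?_
  calc (2 : ℝ) ^ (n + 1) / ((2 : ℝ) ^ n + κ) ^ 2 ≤ (2 : ℝ) ^ (n + 1) / ((2 : ℝ) ^ n) ^ 2 := by
        gcongr
        linarith
    _ = 2 * (1 / 2) ^ n := by
        rw [pow_succ, one_div_pow]
        field_simp

theorem local_martingale_maximal_bound
    {Ω : Type*} {m : MeasurableSpace Ω} {ℙ : Measure Ω} [IsProbabilityMeasure ℙ]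
    (ℱ : Filtration ℝ≥0 m)
    (M Q : ℝ≥0 → Ω → ℝ)
    -- continuous paths, started in zero
    (hM0 : ∀ ω, M 0 ω = 0)
    (hMcont : ∀ ω, Continuous fun t => M t ω)
    -- quadratic variation: continuous, nondecreasing, started in zero
    (hQ0 : ∀ ω, Q 0 ω = 0)
    (hQcont : ∀ ω, Continuous fun t => Q t ω)
    (hQmono : ∀ ω, Monotone fun t => Q t ω)
    -- localizing sequence of stopping times
    (τ : ℕ → Ω → ℝ≥0)
    (hτtop : ∀ ω, Tendsto (fun n => τ n ω) atTop atTop)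
    -- M is a continuous local martingale with quadratic variation Q:
    -- the stopped processes M^{τ n} and (M² - Q)^{τ n} are martingales
    (hMloc : ∀ n, Martingale (MeasureTheory.stoppedProcess M (fun ω => ((τ n ω : ℝ≥0) : WithTop ℝ≥0))) ℱ ℙ)
    (hQloc : ∀ n,
      Martingale (MeasureTheory.stoppedProcess (fun t ω => (M t ω)^2 - Q t ω) (fun ω => ((τ n ω : ℝ≥0) : WithTop ℝ≥0))) ℱ ℙ) :
    ∀ κ : ℝ, 0 < κ →
      ℙ {ω | ∃ t, κ ≤ M t ω - Q t ω} ≤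
        ENNReal.ofReal ((κ^2)⁻¹ + ∑' n : ℕ, (2:ℝ)^(n+1) / ((2:ℝ)^n + κ)^2) := by
  intro κ hκ
  have hbound {c l : ℝ} (hc : 0 ≤ c) (hl : 0 < l) :=
    measure_exists_le_and_le_of_localizing hM0 hMcont hQ0 hQcont hQmono hτtop hMloc hQloc hc hl
  have hnonneg : ∀ n : ℕ, 0 ≤ (2 : ℝ) ^ (n + 1) / ((2 : ℝ) ^ n + κ) ^ 2 := fun n => by positivity
  calc ℙ {ω | ∃ t, κ ≤ M t ω - Q t ω}
      ≤ ℙ ({ω | ∃ t, Q t ω ≤ 1 ∧ κ ≤ M t ω} ∪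
          ⋃ n : ℕ, {ω | ∃ t, Q t ω ≤ 2 ^ (n + 1) ∧ 2 ^ n + κ ≤ M t ω}) := by
        refine measure_mono fun ω ⟨t, ht⟩ => ?_
        rcases le_one_and_le_or_exists_pow_two (hQ0 ω ▸ hQmono ω zero_le) ht with h | ⟨n, h⟩
        · exact .inl ⟨t, h⟩
        · exact .inr (mem_iUnion.2 ⟨n, t, h⟩)
    _ ≤ ℙ {ω | ∃ t, Q t ω ≤ 1 ∧ κ ≤ M t ω} +
          ∑' n : ℕ, ℙ {ω | ∃ t, Q t ω ≤ 2 ^ (n + 1) ∧ 2 ^ n + κ ≤ M t ω} :=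
        (measure_union_le _ _).trans (add_le_add_right (measure_iUnion_le _) _)
    _ ≤ ENNReal.ofReal (1 / κ ^ 2) +
          ∑' n : ℕ, ENNReal.ofReal ((2 : ℝ) ^ (n + 1) / ((2 : ℝ) ^ n + κ) ^ 2) :=
        add_le_add (hbound zero_le_one hκ)
          (ENNReal.tsum_le_tsum fun n => hbound (by positivity) (by positivity))
    _ = ENNReal.ofReal ((κ^2)⁻¹ + ∑' n : ℕ, (2:ℝ)^(n+1) / ((2:ℝ)^n + κ)^2) := by
        rw [← ENNReal.ofReal_tsum_of_nonneg hnonneg (summable_two_pow_succ_div_sq hκ.le),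
          ← ENNReal.ofReal_add (by positivity) (tsum_nonneg hnonneg), one_div]
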